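/- (Theorem 1.) In a matching of two pseudo-Riemannian manifolds preserving a two-dimensional conformal group G₂, with generators ξ^±, η^± that are Φ^±-related to common vector fields γ₁, γ₂ on σ, and with the full junction conditions satisfied (preliminary conditions Φ⁺*g⁺ = Φ⁻*g⁻, identified riggings with [H_{ab}] = 0), the two 4-forms built from each pair of generators agree on the matching hypersurface: (η⁺∧ξ⁺∧dξ⁺)|_Σ = (η⁻∧ξ⁻∧dξ⁻)|_Σ and (ξ⁺∧η⁺∧dη⁺)|_Σ = (ξ⁻∧η⁻∧dη⁻)|_Σ, where ξ, η also denote the metrically dual 1-forms. -/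

import Mathlib

/-!
Coordinate (local-chart) formalization of pseudo-Riemannian geometry on `ℝⁿ`:
manifolds are modeled by `Pt n = Fin n → ℝ`, tensor fields by their component
functions, and all differential-geometric operations (Lie derivatives, the
Levi-Civita connection via Christoffel symbols, curvature, pullbacks along
embeddings, exterior derivatives and wedge products) are defined explicitly.
-/

noncomputable section
open scoped BigOperators

abbrev Pt (n : ℕ) : Type := Fin n → ℝ

/-- Partial derivative `∂_a f` of a scalar function. -/
def pd {n : ℕ} (f : Pt n → ℝ) (a : Fin n) (x : Pt n) : ℝ :=
  fderiv ℝ f x (Pi.single a 1)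

/-- Pairing of a covector (components `ω`) with a vector (components `u`). -/
def ip {n : ℕ} (ω u : Fin n → ℝ) : ℝ := ∑ α, ω α * u α

/-- Scalar product of two vectors with respect to the metric `g`. -/
def gdot {n : ℕ} (g : Pt n → Fin n → Fin n → ℝ) (x : Pt n) (u v : Fin n → ℝ) : ℝ :=
  ∑ a, ∑ b, g x a b * u a * v b

/-- Index lowering: the 1-form `ξ_♭` metrically dual to the vector field `ξ`. -/
def flat {n : ℕ} (g : Pt n → Fin n → Fin n → ℝ) (ξ : Pt n → Pt n) (x : Pt n) (b : Fin n) : ℝ :=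
  ∑ c, g x b c * ξ x c

/-- Lie derivative `(ℒ_ξ g)_{ab}` of a symmetric 2-covariant tensor field `g`
along the vector field `ξ`. -/
def lieD {n : ℕ} (g : Pt n → Fin n → Fin n → ℝ) (ξ : Pt n → Pt n) (x : Pt n) (a b : Fin n) : ℝ :=
  ∑ c, (ξ x c * pd (fun y => g y a b) c x
      + g x c b * pd (fun y => ξ y c) a x
      + g x a c * pd (fun y => ξ y c) b x)

/-- Lie bracket `[ξ, η]` of two vector fields. -/
def lieBr {n : ℕ} (ξ η : Pt n → Pt n) (x : Pt n) : Pt n :=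
  fun a => ∑ b, (ξ x b * pd (fun y => η y a) b x - η x b * pd (fun y => ξ y a) b x)

/-- Christoffel symbols `Γ^a_{bc}` of the Levi-Civita connection of `g`
(`ginv` is the inverse metric). -/
def Chr {n : ℕ} (g ginv : Pt n → Fin n → Fin n → ℝ) (a b c : Fin n) (x : Pt n) : ℝ :=
  (1/2) * ∑ d, ginv x a d *
    (pd (fun y => g y d b) c x + pd (fun y => g y d c) b x - pd (fun y => g y b c) d x)

/-- Covariant derivative `∇_a ω_b` of a 1-form `ω`. -/
def covD {n : ℕ} (g ginv : Pt n → Fin n → Fin n → ℝ) (ω : Pt n → Fin n → ℝ)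
    (x : Pt n) (a b : Fin n) : ℝ :=
  pd (fun y => ω y b) a x - ∑ c, Chr g ginv c a b x * ω x c

/-- Covariant derivative `∇_m S_{abcd}` of a 4-covariant tensor field `S`. -/
def covD4 {n : ℕ} (g ginv : Pt n → Fin n → Fin n → ℝ)
    (S : Pt n → Fin n → Fin n → Fin n → Fin n → ℝ) (x : Pt n) (m a b c d : Fin n) : ℝ :=
  pd (fun y => S y a b c d) m x
    - ∑ e, Chr g ginv e m a x * S x e b c d
    - ∑ e, Chr g ginv e m b x * S x a e c d
    - ∑ e, Chr g ginv e m c x * S x a b e d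
    - ∑ e, Chr g ginv e m d x * S x a b c e

/-- Riemann tensor `R^a_{bcd}` of the Levi-Civita connection. -/
def Riem {n : ℕ} (g ginv : Pt n → Fin n → Fin n → ℝ) (a b c d : Fin n) (x : Pt n) : ℝ :=
  pd (fun y => Chr g ginv a d b y) c x - pd (fun y => Chr g ginv a c b y) d x
    + ∑ e, (Chr g ginv a c e x * Chr g ginv e d b x - Chr g ginv a d e x * Chr g ginv e c b x)

/-- Ricci tensor `R_{bd} = R^a_{bad}`. -/
def RicciT {n : ℕ} (g ginv : Pt n → Fin n → Fin n → ℝ) (b d : Fin n) (x : Pt n) : ℝ :=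
  ∑ a, Riem g ginv a b a d x

/-- Normalized antisymmetrization of a 3-index quantity. -/
def asym3 {ι : Type*} (T : ι → ι → ι → ℝ) (a b c : ι) : ℝ :=
  (1/6) * ∑ σ : Equiv.Perm (Fin 3),
    ((Equiv.Perm.sign σ : ℤ) : ℝ) * T (![a, b, c] (σ 0)) (![a, b, c] (σ 1)) (![a, b, c] (σ 2))

/-- Normalized antisymmetrization of a 4-index quantity. -/
def asym4 {ι : Type*} (T : ι → ι → ι → ι → ℝ) (a b c d : ι) : ℝ :=
  (1/24) * ∑ σ : Equiv.Perm (Fin 4),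
    ((Equiv.Perm.sign σ : ℤ) : ℝ) *
      T (![a, b, c, d] (σ 0)) (![a, b, c, d] (σ 1)) (![a, b, c, d] (σ 2)) (![a, b, c, d] (σ 3))

/-- Pullback `Φ* g` of a 2-covariant tensor field along a map `Φ`
(first fundamental form when `Φ` is an embedding and `g` the metric). -/
def pull2 {d m : ℕ} (Φ : Pt d → Pt m) (g : Pt m → Fin m → Fin m → ℝ)
    (p : Pt d) (a b : Fin d) : ℝ :=
  ∑ α, ∑ β, g (Φ p) α β *
    fderiv ℝ Φ p (Pi.single a 1) α * fderiv ℝ Φ p (Pi.single b 1) β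

/-- The tangent frame `e_a = dΦ(∂/∂λ^a)` along the hypersurface `Σ = Φ(σ)`. -/
def eF {d : ℕ} (Φ : Pt d → Pt (d+1)) (a : Fin d) (p : Pt d) : Pt (d+1) :=
  fderiv ℝ Φ p (Pi.single a 1)

/-- Exterior derivative `dω` of a 1-form evaluated on two vectors:
`dω(u,v) = u^α v^β (∂_α ω_β - ∂_β ω_α)`. -/
def dext {n : ℕ} (ω : Pt n → Fin n → ℝ) (x : Pt n) (u v : Fin n → ℝ) : ℝ :=
  ∑ α, ∑ β, u α * v β * (pd (fun y => ω y β) α x - pd (fun y => ω y α) β x)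

/-- Wedge product of two covectors evaluated on two vectors. -/
def wdg2 {n : ℕ} (ω τ : Fin n → ℝ) (u v : Fin n → ℝ) : ℝ :=
  ip ω u * ip τ v - ip ω v * ip τ u

/-- Wedge product of four covectors evaluated on four vectors (determinant convention). -/
def wdg4 {n : ℕ} (ω₁ ω₂ ω₃ ω₄ : Fin n → ℝ) (u : Fin 4 → Fin n → ℝ) : ℝ :=
  ∑ σ : Equiv.Perm (Fin 4), ((Equiv.Perm.sign σ : ℤ) : ℝ) *
    (ip ω₁ (u (σ 0)) * ip ω₂ (u (σ 1)) * ip ω₃ (u (σ 2)) * ip ω₄ (u (σ 3)))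

/-- The 4-form `A_♭ ∧ B_♭ ∧ d(B_♭)` built from two vector fields `A`, `B`
(indices lowered with `g`), evaluated on four vectors. -/
def form4 {n : ℕ} (g : Pt n → Fin n → Fin n → ℝ) (A B : Pt n → Pt n) (x : Pt n)
    (u : Fin 4 → Fin n → ℝ) : ℝ :=
  (1/2) * ∑ σ : Equiv.Perm (Fin 4), ((Equiv.Perm.sign σ : ℤ) : ℝ) *
    (ip (flat g A x) (u (σ 0)) * ip (flat g B x) (u (σ 1)) *
      dext (flat g B) x (u (σ 2)) (u (σ 3)))

/-- Covariant derivative `∇_{e_a} ℓ` of a vector field `ℓ` defined along `Σ = Φ(σ)`. -/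
def covVecS {d : ℕ} (g ginv : Pt (d+1) → Fin (d+1) → Fin (d+1) → ℝ) (Φ : Pt d → Pt (d+1))
    (ℓ : Pt d → Pt (d+1)) (a : Fin d) (p : Pt d) : Pt (d+1) :=
  fun μ => pd (fun q => ℓ q μ) a p + ∑ ν, ∑ ρ, Chr g ginv μ ν ρ (Φ p) * eF Φ a p ν * ℓ p ρ

/-- The lowered components `ℓ_ν` along `Σ` of a vector field `ℓ` defined along `Σ`. -/
def flatS {d : ℕ} (g : Pt (d+1) → Fin (d+1) → Fin (d+1) → ℝ) (Φ : Pt d → Pt (d+1))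
    (ℓ : Pt d → Pt (d+1)) (p : Pt d) (ν : Fin (d+1)) : ℝ :=
  ∑ ρ, g (Φ p) ν ρ * ℓ p ρ

/-- Generalized second fundamental form `H_{ab} = e_a^μ e_b^ν ∇_μ ℓ_ν`
with respect to the rigging `ℓ`. -/
def Hgen {d : ℕ} (g ginv : Pt (d+1) → Fin (d+1) → Fin (d+1) → ℝ) (Φ : Pt d → Pt (d+1))
    (ℓ : Pt d → Pt (d+1)) (a b : Fin d) (p : Pt d) : ℝ :=
  ∑ ν, eF Φ b p ν * (pd (fun q => flatS g Φ ℓ q ν) a p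
    - ∑ c, (∑ μ, eF Φ a p μ * Chr g ginv c μ ν (Φ p)) * flatS g Φ ℓ p c)

/-- Transversal component `B_a = 2 ℓ^α e_a^β ∇_{[α} ω_{β]}` of `dω` along `Σ`. -/
def Bcoef {d : ℕ} (g ginv : Pt (d+1) → Fin (d+1) → Fin (d+1) → ℝ) (Φ : Pt d → Pt (d+1))
    (ℓ : Pt d → Pt (d+1)) (ω : Pt (d+1) → Fin (d+1) → ℝ) (a : Fin d) (p : Pt d) : ℝ :=
  ∑ α, ∑ β, ℓ p α * eF Φ a p β * (covD g ginv ω (Φ p) α β - covD g ginv ω (Φ p) β α)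

/-- Tangential component `A_{ab} = e_{[a}(ω_{b]})` of `dω` along `Σ`. -/
def Acoef {d : ℕ} (Φ : Pt d → Pt (d+1)) (ω : Pt (d+1) → Fin (d+1) → ℝ)
    (a b : Fin d) (p : Pt d) : ℝ :=
  (1/2) * (pd (fun q => ip (ω (Φ q)) (eF Φ b q)) a p - pd (fun q => ip (ω (Φ q)) (eF Φ a q)) b p)

/-- The identified frame `{ℓ, e_a}` along `Σ`, indexed by `Option (Fin d)`. -/
def frameV {d : ℕ} (Φ : Pt d → Pt (d+1)) (ℓ : Pt d → Pt (d+1)) (p : Pt d) :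
    Option (Fin d) → Pt (d+1)
  | none => ℓ p
  | some a => eF Φ a p

set_option linter.unusedSectionVars false


lemma dAtV {n m : ℕ} {f : Pt n → Pt m} (h : ContDiff ℝ (⊤ : ℕ∞) f) (x : Pt n) :
    DifferentiableAt ℝ f x :=
  h.differentiable (by simp) x

lemma pd_congr {n : ℕ} {f g : Pt n → ℝ} (h : ∀ y, f y = g y) (a : Fin n) (x : Pt n) :
    pd f a x = pd g a x := by
  have : f = g := funext h
  rw [this]

lemma pd_mul {n : ℕ} {f g : Pt n → ℝ} (a : Fin n) (x : Pt n)
    (hf : DifferentiableAt ℝ f x) (hg : DifferentiableAt ℝ g x) :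
    pd (fun y => f y * g y) a x = pd f a x * g x + f x * pd g a x := by
  unfold pd
  rw [fderiv_fun_mul hf hg]
  simp
  ring

lemma pd_sum {n : ℕ} {ι : Type*} (s : Finset ι) (f : ι → Pt n → ℝ) (a : Fin n) (x : Pt n)
    (hf : ∀ i ∈ s, DifferentiableAt ℝ (f i) x) :
    pd (fun y => ∑ i ∈ s, f i y) a x = ∑ i ∈ s, pd (f i) a x := by
  unfold pd
  rw [fderiv_fun_sum hf]
  simp

lemma vec_eq_sum_single {n : ℕ} (v : Pt n) : v = ∑ μ, v μ • (Pi.single μ (1:ℝ) : Pt n) := by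
  ext j
  rw [Finset.sum_apply]
  simp [Pi.single_apply]

lemma pd_comp {d m : ℕ} (F : Pt m → ℝ) (Φ : Pt d → Pt m) (a : Fin d) (p : Pt d)
    (hF : DifferentiableAt ℝ F (Φ p)) (hΦ : DifferentiableAt ℝ Φ p) :
    pd (fun q => F (Φ q)) a p = ∑ μ, fderiv ℝ Φ p (Pi.single a 1) μ * pd F μ (Φ p) := by
  unfold pd
  have h := fderiv_comp p hF hΦ
  rw [show (fun q => F (Φ q)) = F ∘ Φ from rfl, h]
  simp only [ContinuousLinearMap.coe_comp', Function.comp_apply]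
  rw [show (fderiv ℝ Φ p) (Pi.single a 1)
      = ∑ μ, (fderiv ℝ Φ p (Pi.single a 1)) μ • (Pi.single μ (1:ℝ) : Pt m) from
    vec_eq_sum_single _, map_sum]
  simp [smul_eq_mul, Pi.single_apply]

lemma pd_pd_symm {n : ℕ} (f : Pt n → ℝ) (hf : ContDiff ℝ (⊤ : ℕ∞) f) (a b : Fin n) (x : Pt n) :
    pd (fun y => pd f b y) a x = pd (fun y => pd f a y) b x := by
  have h2 : ContDiff ℝ (2 : ℕ∞) f := hf.of_le (by exact_mod_cast le_top)
  have hsymm : IsSymmSndFDerivAt ℝ f x := h2.contDiffAt.isSymmSndFDerivAt (by simp)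
  have hdf : DifferentiableAt ℝ (fderiv ℝ f) x := by
    have : ContDiff ℝ (⊤ : ℕ∞) (fderiv ℝ f) := hf.fderiv_right (by exact_mod_cast le_top)
    exact this.differentiable (by simp) x
  have key : ∀ (u : Pt n) (v : Fin n), pd (fun y => fderiv ℝ f y u) v x
      = fderiv ℝ (fderiv ℝ f) x (Pi.single v 1) u := by
    intro u v
    unfold pd
    rw [fderiv_clm_apply hdf (differentiableAt_const u)]
    simp
  show pd (fun y => fderiv ℝ f y (Pi.single b 1)) a x = pd (fun y => fderiv ℝ f y (Pi.single a 1)) b x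
  rw [key, key, hsymm.eq]
lemma sum_rot3 {A B C : Type*} [Fintype A] [Fintype B] [Fintype C] (F : A → B → C → ℝ) :
    (∑ a, ∑ b, ∑ c, F a b c) = ∑ c, ∑ a, ∑ b, F a b c := by
  rw [show (∑ a, ∑ b, ∑ c, F a b c) = ∑ a, ∑ c, ∑ b, F a b c from
    Finset.sum_congr rfl fun _ _ => Finset.sum_comm]
  exact Finset.sum_comm

/-! ### Toolkit -/

lemma dAt {n : ℕ} {f : Pt n → ℝ} (h : ContDiff ℝ (⊤ : ℕ∞) f) (x : Pt n) :
    DifferentiableAt ℝ f x :=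
  h.differentiable (by simp) x

lemma ef_eq_pd {d : ℕ} {Φ : Pt d → Pt (d+1)} (hΦ : ContDiff ℝ (⊤ : ℕ∞) Φ)
    (a : Fin d) (p : Pt d) (μ : Fin (d+1)) :
    eF Φ a p μ = pd (fun y => Φ y μ) a p := by
  have hd : DifferentiableAt ℝ Φ p := hΦ.differentiable (by simp) p
  have h0 := ((ContinuousLinearMap.proj (R := ℝ) (φ := fun _ : Fin (d+1) => ℝ) μ)
      |>.hasFDerivAt (x := Φ p)).comp p hd.hasFDerivAt
  have h1 : HasFDerivAt (fun y => Φ y μ)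
      ((ContinuousLinearMap.proj μ).comp (fderiv ℝ Φ p)) p := h0
  unfold eF pd
  rw [h1.fderiv]
  rfl

lemma cd_comp_phi {d : ℕ} {Φ : Pt d → Pt (d+1)} (hΦ : ContDiff ℝ (⊤ : ℕ∞) Φ)
    {F : Pt (d+1) → ℝ} (hF : ContDiff ℝ (⊤ : ℕ∞) F) :
    ContDiff ℝ (⊤ : ℕ∞) (fun q => F (Φ q)) := hF.comp hΦ

lemma cd_eF {d : ℕ} {Φ : Pt d → Pt (d+1)} (hΦ : ContDiff ℝ (⊤ : ℕ∞) Φ)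
    (a : Fin d) (μ : Fin (d+1)) :
    ContDiff ℝ (⊤ : ℕ∞) (fun p => eF Φ a p μ) := by
  have h1 : ContDiff ℝ (⊤ : ℕ∞) (fderiv ℝ Φ) := hΦ.fderiv_right (by exact_mod_cast le_top)
  have h2 : ContDiff ℝ (⊤ : ℕ∞) (fun p => fderiv ℝ Φ p (Pi.single a 1)) :=
    h1.clm_apply contDiff_const
  exact (contDiff_pi.mp h2) μ

lemma cd_pi {n m : ℕ} {f : Pt n → Pt m} (h : ContDiff ℝ (⊤ : ℕ∞) f) (i : Fin m) :
    ContDiff ℝ (⊤ : ℕ∞) (fun x => f x i) := (contDiff_pi.mp h) i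

/-- symmetry of `∂_a e_b` -/
lemma ef_pd_symm {d : ℕ} {Φ : Pt d → Pt (d+1)} (hΦ : ContDiff ℝ (⊤ : ℕ∞) Φ)
    (a b : Fin d) (p : Pt d) (μ : Fin (d+1)) :
    pd (fun q => eF Φ b q μ) a p = pd (fun q => eF Φ a q μ) b p := by
  rw [pd_congr (fun q => ef_eq_pd hΦ b q μ), pd_congr (fun q => ef_eq_pd hΦ a q μ),
    pd_pd_symm _ (cd_pi hΦ μ)]

/-- Expansion of a Φ-related field on the image in terms of the frame. -/
lemma rel_expand {d : ℕ} {Φ : Pt d → Pt (d+1)} {B : Pt (d+1) → Pt (d+1)} {γ : Pt d → Pt d}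
    (hrel : ∀ q, fderiv ℝ Φ q (γ q) = B (Φ q)) (q : Pt d) (μ : Fin (d+1)) :
    B (Φ q) μ = ∑ c, γ q c * eF Φ c q μ := by
  rw [← hrel q]
  conv_lhs => rw [show γ q = ∑ c, γ q c • (Pi.single c (1:ℝ) : Pt d) from vec_eq_sum_single _,
    map_sum]
  rw [Finset.sum_apply]
  simp [eF, smul_eq_mul]

/-- `ip (flat B) e_b` in terms of the first fundamental form. -/
lemma ipflat_e {d : ℕ} {g : Pt (d+1) → Fin (d+1) → Fin (d+1) → ℝ}
    {Φ : Pt d → Pt (d+1)} {B : Pt (d+1) → Pt (d+1)} {γ : Pt d → Pt d}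
    (hgsymm : ∀ x a b, g x a b = g x b a)
    (hrel : ∀ q, fderiv ℝ Φ q (γ q) = B (Φ q)) (q : Pt d) (b : Fin d) :
    ip (flat g B (Φ q)) (eF Φ b q) = ∑ c, γ q c * pull2 Φ g q c b := by
  unfold ip flat pull2
  calc ∑ ν, (∑ ρ, g (Φ q) ν ρ * B (Φ q) ρ) * eF Φ b q ν
      = ∑ ν, ∑ ρ, ∑ c, g (Φ q) ν ρ * (γ q c * eF Φ c q ρ) * eF Φ b q ν := by
        simp only [Finset.sum_mul]
        refine Finset.sum_congr rfl fun ν _ => Finset.sum_congr rfl fun ρ _ => ?_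
        rw [rel_expand hrel q ρ, Finset.mul_sum, Finset.sum_mul]
    _ = ∑ c, γ q c * ∑ α, ∑ β, g (Φ q) α β * eF Φ c q α * eF Φ b q β := by
        rw [sum_rot3]
        refine Finset.sum_congr rfl fun c _ => ?_
        rw [Finset.mul_sum]
        rw [Finset.sum_comm]
        refine Finset.sum_congr rfl fun α _ => ?_
        rw [Finset.mul_sum]
        refine Finset.sum_congr rfl fun β _ => ?_
        rw [hgsymm (Φ q) β α]
        ring
    _ = ∑ c, γ q c * ∑ α, ∑ β, g (Φ q) α β
          * fderiv ℝ Φ q (Pi.single c 1) α * fderiv ℝ Φ q (Pi.single b 1) β := rfl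

/-- `ip (flat B) ℓ` in terms of `gdot ℓ e_c`. -/
lemma ipflat_l {d : ℕ} {g : Pt (d+1) → Fin (d+1) → Fin (d+1) → ℝ}
    {Φ : Pt d → Pt (d+1)} {ℓ : Pt d → Pt (d+1)} {B : Pt (d+1) → Pt (d+1)} {γ : Pt d → Pt d}
    (hrel : ∀ q, fderiv ℝ Φ q (γ q) = B (Φ q)) (q : Pt d) :
    ip (flat g B (Φ q)) (ℓ q) = ∑ c, γ q c * gdot g (Φ q) (ℓ q) (eF Φ c q) := by
  unfold ip flat gdot
  calc ∑ ν, (∑ ρ, g (Φ q) ν ρ * B (Φ q) ρ) * ℓ q ν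
      = ∑ ν, ∑ ρ, ∑ c, γ q c * (g (Φ q) ν ρ * ℓ q ν * eF Φ c q ρ) := by
        refine Finset.sum_congr rfl fun ν _ => ?_
        rw [Finset.sum_mul]
        refine Finset.sum_congr rfl fun ρ _ => ?_
        rw [rel_expand hrel q ρ, Finset.mul_sum, Finset.sum_mul]
        exact Finset.sum_congr rfl fun c _ => by ring
    _ = ∑ c, γ q c * ∑ a, ∑ b, g (Φ q) a b * ℓ q a * eF Φ c q b := by
        rw [sum_rot3]
        refine Finset.sum_congr rfl fun c _ => ?_
        rw [Finset.mul_sum]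
        refine Finset.sum_congr rfl fun a _ => ?_
        rw [Finset.mul_sum]

/-- antisymmetry of `dext`. -/
lemma dext_antisym {n : ℕ} (ω : Pt n → Fin n → ℝ) (x : Pt n) (u v : Fin n → ℝ) :
    dext ω x u v = - dext ω x v u := by
  unfold dext
  rw [Finset.sum_comm, ← Finset.sum_neg_distrib]
  refine Finset.sum_congr rfl fun β _ => ?_
  rw [← Finset.sum_neg_distrib]
  exact Finset.sum_congr rfl fun α _ => by ring

lemma dext_self {n : ℕ} (ω : Pt n → Fin n → ℝ) (x : Pt n) (u : Fin n → ℝ) :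
    dext ω x u u = 0 := by
  have := dext_antisym ω x u u
  linarith
/-! ### Inverse metric -/

section Ginv
variable {d : ℕ} {g ginv : Pt (d+1) → Fin (d+1) → Fin (d+1) → ℝ}
  (hgsymm : ∀ x a b, g x a b = g x b a)
  (hinv : ∀ x a b, (∑ c, ginv x a c * g x c b) = if a = b then (1:ℝ) else 0)

include hgsymm hinv in
lemma ginv_symm : ∀ x a b, ginv x a b = ginv x b a := by
  intro x a b
  set G : Matrix (Fin (d+1)) (Fin (d+1)) ℝ := Matrix.of (fun a b => g x a b) with hG
  set Gi : Matrix (Fin (d+1)) (Fin (d+1)) ℝ := Matrix.of (fun a b => ginv x a b) with hGi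
  have h1 : Gi * G = 1 := by
    ext i j
    rw [Matrix.mul_apply]
    simpa [hG, hGi, Matrix.one_apply] using hinv x i j
  have h2 : G * Gi = 1 := mul_eq_one_comm.mp h1
  have hGt : G.transpose = G := by
    ext i j; simp [hG, Matrix.transpose_apply]; exact hgsymm x j i
  have h3 : Gi.transpose * G = 1 := by
    calc Gi.transpose * G = Gi.transpose * G.transpose := by rw [hGt]
      _ = (G * Gi).transpose := by rw [Matrix.transpose_mul]
      _ = 1 := by rw [h2, Matrix.transpose_one]
  have h4 : Gi.transpose = Gi := by
    calc Gi.transpose = Gi.transpose * (G * Gi) := by rw [h2, mul_one]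
      _ = (Gi.transpose * G) * Gi := by rw [mul_assoc]
      _ = Gi := by rw [h3, one_mul]
  have h5 : Gi.transpose a b = Gi a b := by rw [h4]
  rw [Matrix.transpose_apply] at h5
  simpa [hGi] using h5.symm

include hgsymm hinv in
lemma hinv' : ∀ x a b, (∑ c, ginv x c a * g x c b) = if a = b then (1:ℝ) else 0 := by
  intro x a b
  rw [show (∑ c, ginv x c a * g x c b) = ∑ c, ginv x a c * g x c b from
    Finset.sum_congr rfl fun c _ => by rw [ginv_symm hgsymm hinv x c a]]
  exact hinv x a b

include hgsymm hinv in
/-- Contraction of the Christoffel symbols with a lowered vector. -/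
lemma chr_contract : ∀ (x : Pt (d+1)) (L : Fin (d+1) → ℝ) (μ ν : Fin (d+1)),
    (∑ c, Chr g ginv c μ ν x * (∑ ρ, g x c ρ * L ρ))
    = (1/2) * ∑ e, L e * (pd (fun y => g y e μ) ν x + pd (fun y => g y e ν) μ x
        - pd (fun y => g y μ ν) e x) := by
  intro x L μ ν
  unfold Chr
  set T : Fin (d+1) → ℝ := fun e => pd (fun y => g y e μ) ν x + pd (fun y => g y e ν) μ x
      - pd (fun y => g y μ ν) e x with hT
  calc (∑ c, ((1/2) * ∑ e, ginv x c e * T e) * (∑ ρ, g x c ρ * L ρ))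
      = ∑ c, ∑ e, ∑ ρ, (1/2) * (T e * L ρ * (ginv x c e * g x c ρ)) := by
        refine Finset.sum_congr rfl fun c _ => ?_
        rw [show ((1/2) * ∑ e, ginv x c e * T e) * (∑ ρ, g x c ρ * L ρ)
          = (1/2) * ((∑ e, ginv x c e * T e) * (∑ ρ, g x c ρ * L ρ)) from by ring,
          Finset.sum_mul_sum, Finset.mul_sum]
        refine Finset.sum_congr rfl fun e _ => ?_
        rw [Finset.mul_sum]
        exact Finset.sum_congr rfl fun ρ _ => by ring
    _ = ∑ e, ∑ ρ, (1/2) * (T e * L ρ) * (∑ c, ginv x c e * g x c ρ) := by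
        rw [Finset.sum_comm]
        refine Finset.sum_congr rfl fun e _ => ?_
        rw [Finset.sum_comm]
        refine Finset.sum_congr rfl fun ρ _ => ?_
        rw [Finset.mul_sum]
        exact Finset.sum_congr rfl fun c _ => by ring
    _ = ∑ e, ∑ ρ, (1/2) * (T e * L ρ) * (if e = ρ then (1:ℝ) else 0) := by
        refine Finset.sum_congr rfl fun e _ => Finset.sum_congr rfl fun ρ _ => ?_
        rw [hinv' hgsymm hinv x e ρ]
    _ = ∑ e, (1/2) * (T e * L e) := by
        refine Finset.sum_congr rfl fun e _ => ?_
        simp only [mul_ite, mul_one, mul_zero, Finset.sum_ite_eq, Finset.mem_univ, if_true]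
    _ = (1/2) * ∑ e, L e * T e := by
        rw [Finset.mul_sum]
        exact Finset.sum_congr rfl fun e _ => by ring

end Ginv

/-! ### Differentiability of `flat` -/

lemma cd_flat {n : ℕ} {g : Pt n → Fin n → Fin n → ℝ} {B : Pt n → Pt n}
    (hg : ∀ a b, ContDiff ℝ (⊤ : ℕ∞) fun x => g x a b) (hB : ContDiff ℝ (⊤ : ℕ∞) B)
    (β : Fin n) : ContDiff ℝ (⊤ : ℕ∞) (fun y => flat g B y β) := by
  unfold flat
  exact ContDiff.sum fun c _ => (hg β c).mul (cd_pi hB c)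

/-! ### Conformal Killing ⇒ symmetrized derivative identity -/

lemma conf_symm_pd {n : ℕ} {g : Pt n → Fin n → Fin n → ℝ} {B : Pt n → Pt n} {αc : Pt n → ℝ}
    (hg : ∀ a b, ContDiff ℝ (⊤ : ℕ∞) fun x => g x a b) (hB : ContDiff ℝ (⊤ : ℕ∞) B)
    (hgsymm : ∀ x a b, g x a b = g x b a)
    (hconf : ∀ x a b, lieD g B x a b = αc x * g x a b) :
    ∀ (x : Pt n) (α β : Fin n),
    pd (fun y => flat g B y β) α x + pd (fun y => flat g B y α) β x
      = αc x * g x α β + ∑ e, B x e * (pd (fun y => g y β e) α x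
          + pd (fun y => g y α e) β x - pd (fun y => g y α β) e x) := by
  intro x α β
  have hd1 : ∀ (γ' : Fin n) (e : Fin n), DifferentiableAt ℝ (fun y => g y γ' e) x :=
    fun γ' e => dAt (hg γ' e) x
  have hd2 : ∀ e : Fin n, DifferentiableAt ℝ (fun y => B y e) x := fun e => dAt (cd_pi hB e) x
  have e1 : ∀ γ' δ' : Fin n, pd (fun y => flat g B y δ') γ' x
      = ∑ e, (pd (fun y => g y δ' e) γ' x * B x e + g x δ' e * pd (fun y => B y e) γ' x) := by
    intro γ' δ'
    unfold flat
    rw [pd_sum _ _ _ _ (fun e _ => ((hd1 δ' e).fun_mul (hd2 e)))]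
    exact Finset.sum_congr rfl fun e _ => pd_mul _ _ (hd1 δ' e) (hd2 e)
  have e2 := hconf x α β
  unfold lieD at e2
  rw [e1, e1]
  rw [Finset.sum_add_distrib, Finset.sum_add_distrib]
  have e3 : (∑ e, g x β e * pd (fun y => B y e) α x) + ∑ e, g x α e * pd (fun y => B y e) β x
      = αc x * g x α β - ∑ e, B x e * pd (fun y => g y α β) e x := by
    rw [← e2, Finset.sum_add_distrib, Finset.sum_add_distrib]
    have : ∀ e, g x e β = g x β e := fun e => hgsymm x e β
    simp only [this]
    ring
  calc (∑ e, pd (fun y => g y β e) α x * B x e) + (∑ e, g x β e * pd (fun y => B y e) α x)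
        + ((∑ e, pd (fun y => g y α e) β x * B x e) + ∑ e, g x α e * pd (fun y => B y e) β x)
      = (∑ e, pd (fun y => g y β e) α x * B x e) + (∑ e, pd (fun y => g y α e) β x * B x e)
        + ((∑ e, g x β e * pd (fun y => B y e) α x) + ∑ e, g x α e * pd (fun y => B y e) β x) := by
        ring
    _ = (∑ e, pd (fun y => g y β e) α x * B x e) + (∑ e, pd (fun y => g y α e) β x * B x e)
        + (αc x * g x α β - ∑ e, B x e * pd (fun y => g y α β) e x) := by rw [e3]
    _ = αc x * g x α β + ∑ e, B x e * (pd (fun y => g y β e) α x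
          + pd (fun y => g y α e) β x - pd (fun y => g y α β) e x) := by
        rw [show (∑ e, B x e * (pd (fun y => g y β e) α x
          + pd (fun y => g y α e) β x - pd (fun y => g y α β) e x))
          = (∑ e, pd (fun y => g y β e) α x * B x e) + (∑ e, pd (fun y => g y α e) β x * B x e)
            - ∑ e, B x e * pd (fun y => g y α β) e x from ?_]
        · ring
        rw [← Finset.sum_add_distrib, ← Finset.sum_sub_distrib]
        exact Finset.sum_congr rfl fun e _ => by ring
lemma sum_swap13 {A B C : Type*} [Fintype A] [Fintype B] [Fintype C] (F : A → B → C → ℝ) :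
    (∑ a, ∑ b, ∑ c, F a b c) = ∑ c, ∑ b, ∑ a, F a b c := by
  rw [sum_rot3]
  exact Finset.sum_congr rfl fun c _ => Finset.sum_comm

lemma sum_swap23 {A B C : Type*} [Fintype A] [Fintype B] [Fintype C] (F : A → B → C → ℝ) :
    (∑ a, ∑ b, ∑ c, F a b c) = ∑ a, ∑ c, ∑ b, F a b c :=
  Finset.sum_congr rfl fun _ _ => Finset.sum_comm

section Side
variable {d : ℕ} {g : Pt (d+1) → Fin (d+1) → Fin (d+1) → ℝ}
  {Φ : Pt d → Pt (d+1)} {ℓ : Pt d → Pt (d+1)} {B : Pt (d+1) → Pt (d+1)} {γ : Pt d → Pt d}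
  {αc : Pt (d+1) → ℝ}
  (hg : ∀ a b, ContDiff ℝ (⊤ : ℕ∞) fun x => g x a b)
  (hΦ : ContDiff ℝ (⊤ : ℕ∞) Φ)
  (hB : ContDiff ℝ (⊤ : ℕ∞) B)

include hg hΦ hB in
/-- chain rule for the lowered `B` along `Φ`. -/
lemma pd_flat_comp (β : Fin (d+1)) (a : Fin d) (p : Pt d) :
    pd (fun q => flat g B (Φ q) β) a p = ∑ α, eF Φ a p α * pd (fun y => flat g B y β) α (Φ p) := by
  exact pd_comp _ _ _ _ (dAt (cd_flat hg hB β) (Φ p)) (dAtV hΦ p)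

include hg hΦ hB in
/-- product rule for `ip (flat B ∘ Φ) (e_b)`. -/
lemma pd_ip_flat (a b : Fin d) (p : Pt d) :
    pd (fun q => ip (flat g B (Φ q)) (eF Φ b q)) a p
      = ∑ β, (pd (fun q => flat g B (Φ q) β) a p * eF Φ b p β
          + flat g B (Φ p) β * pd (fun q => eF Φ b q β) a p) := by
  have h1 : ∀ β : Fin (d+1), DifferentiableAt ℝ (fun q => flat g B (Φ q) β) p :=
    fun β => dAt (cd_comp_phi hΦ (cd_flat hg hB β)) p
  have h2 : ∀ β : Fin (d+1), DifferentiableAt ℝ (fun q => eF Φ b q β) p :=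
    fun β => dAt (cd_eF hΦ b β) p
  rw [show (fun q => ip (flat g B (Φ q)) (eF Φ b q))
      = (fun q => ∑ β, flat g B (Φ q) β * eF Φ b q β) from rfl]
  rw [pd_sum _ _ _ _ (fun β _ => (h1 β).fun_mul (h2 β))]
  exact Finset.sum_congr rfl fun β _ => pd_mul _ _ (h1 β) (h2 β)

include hg hΦ hB in
/-- Tangential components of `d(flat B)` pull back to `σ`. -/
lemma dext_tangent (a b : Fin d) (p : Pt d) :
    dext (flat g B) (Φ p) (eF Φ a p) (eF Φ b p)
      = pd (fun q => ip (flat g B (Φ q)) (eF Φ b q)) a p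
        - pd (fun q => ip (flat g B (Φ q)) (eF Φ a q)) b p := by
  have e1 : dext (flat g B) (Φ p) (eF Φ a p) (eF Φ b p)
      = (∑ β, eF Φ b p β * pd (fun q => flat g B (Φ q) β) a p)
        - ∑ α, eF Φ a p α * pd (fun q => flat g B (Φ q) α) b p := by
    unfold dext
    rw [show (∑ α, ∑ β, eF Φ a p α * eF Φ b p β *
          (pd (fun y => flat g B y β) α (Φ p) - pd (fun y => flat g B y α) β (Φ p)))
        = (∑ α, ∑ β, eF Φ b p β * (eF Φ a p α * pd (fun y => flat g B y β) α (Φ p)))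
          - ∑ α, ∑ β, eF Φ a p α * (eF Φ b p β * pd (fun y => flat g B y α) β (Φ p)) from by
      rw [← Finset.sum_sub_distrib]
      refine Finset.sum_congr rfl fun α _ => ?_
      rw [← Finset.sum_sub_distrib]
      exact Finset.sum_congr rfl fun β _ => by ring]
    congr 1
    · rw [Finset.sum_comm]
      refine Finset.sum_congr rfl fun β _ => ?_
      rw [pd_flat_comp hg hΦ hB, Finset.mul_sum]
    · refine Finset.sum_congr rfl fun α _ => ?_
      rw [pd_flat_comp hg hΦ hB, Finset.mul_sum]
  rw [e1, pd_ip_flat hg hΦ hB a b p, pd_ip_flat hg hΦ hB b a p]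
  rw [Finset.sum_add_distrib, Finset.sum_add_distrib]
  have e2 : (∑ β, flat g B (Φ p) β * pd (fun q => eF Φ b q β) a p)
      = ∑ β, flat g B (Φ p) β * pd (fun q => eF Φ a q β) b p :=
    Finset.sum_congr rfl fun β _ => by rw [ef_pd_symm hΦ]
  rw [e2]
  have e3 : ∀ (c c' : Fin d), (∑ β, pd (fun q => flat g B (Φ q) β) c p * eF Φ c' p β)
      = ∑ β, eF Φ c' p β * pd (fun q => flat g B (Φ q) β) c p :=
    fun c c' => Finset.sum_congr rfl fun β _ => by ring
  rw [e3 a b, e3 b a]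
  ring

lemma pull2_eF (y : Pt d) (a b : Fin d) :
    pull2 Φ g y a b = ∑ α, ∑ β, g (Φ y) α β * eF Φ a y α * eF Φ b y β := rfl

variable (hγ : ContDiff ℝ (⊤ : ℕ∞) γ)
  (hrel : ∀ q, fderiv ℝ Φ q (γ q) = B (Φ q))

include hg hΦ hB hγ hrel in
/-- chain rule for `B ∘ Φ` expressed through `γ` and the frame. -/
lemma pd_comp_B (q : Pt d) (a : Fin d) (α : Fin (d+1)) :
    (∑ μ, eF Φ a q μ * pd (fun y => B y α) μ (Φ q))
      = ∑ c, (pd (fun y => γ y c) a q * eF Φ c q α + γ q c * pd (fun q' => eF Φ c q' α) a q) := by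
  have h1 : pd (fun y => B (Φ y) α) a q = ∑ μ, eF Φ a q μ * pd (fun y => B y α) μ (Φ q) :=
    pd_comp _ _ _ _ (dAt (cd_pi hB α) (Φ q)) (dAtV hΦ q)
  rw [← h1]
  rw [pd_congr (fun y => rel_expand hrel y α)]
  have h2 : ∀ c : Fin d, DifferentiableAt ℝ (fun y => γ y c) q := fun c => dAt (cd_pi hγ c) q
  have h3 : ∀ c : Fin d, DifferentiableAt ℝ (fun y => eF Φ c y α) q :=
    fun c => dAt (cd_eF hΦ c α) q
  rw [pd_sum _ _ _ _ (fun c _ => (h2 c).fun_mul (h3 c))]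
  exact Finset.sum_congr rfl fun c _ => pd_mul _ _ (h2 c) (h3 c)

include hg hΦ hB hγ hrel in
/-- The pullback of the conformal Killing equation to `σ`. -/
lemma pullback_conf
    (hconf : ∀ x a b, lieD g B x a b = αc x * g x a b) (q : Pt d) (a b : Fin d) :
    αc (Φ q) * pull2 Φ g q a b
      = (∑ c, γ q c * pd (fun y => pull2 Φ g y a b) c q)
        + (∑ c, pull2 Φ g q c b * pd (fun y => γ y c) a q)
        + ∑ c, pull2 Φ g q a c * pd (fun y => γ y c) b q := by
  have hdg : ∀ α β : Fin (d+1), DifferentiableAt ℝ (fun y => g (Φ y) α β) q :=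
    fun α β => dAt (cd_comp_phi hΦ (hg α β)) q
  have hde : ∀ (c : Fin d) (α : Fin (d+1)), DifferentiableAt ℝ (fun y => eF Φ c y α) q :=
    fun c α => dAt (cd_eF hΦ c α) q
  -- derivative of the first fundamental form
  have pdh : ∀ c : Fin d, pd (fun y => pull2 Φ g y a b) c q
      = ∑ α, ∑ β, (pd (fun y => g (Φ y) α β) c q * eF Φ a q α * eF Φ b q β
          + g (Φ q) α β * (pd (fun y => eF Φ a y α) c q * eF Φ b q β
            + eF Φ a q α * pd (fun y => eF Φ b y β) c q)) := by
    intro c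
    rw [pd_congr (fun y => pull2_eF y a b)]
    rw [pd_sum _ _ _ _ (fun α _ => DifferentiableAt.fun_sum fun β _ =>
      ((hdg α β).fun_mul (hde a α)).fun_mul (hde b β))]
    refine Finset.sum_congr rfl fun α _ => ?_
    rw [pd_sum _ _ _ _ (fun β _ => ((hdg α β).fun_mul (hde a α)).fun_mul (hde b β))]
    refine Finset.sum_congr rfl fun β _ => ?_
    rw [pd_mul _ _ ((hdg α β).fun_mul (hde a α)) (hde b β), pd_mul _ _ (hdg α β) (hde a α)]
    ring
  -- split the γ-contracted derivative into three triple sums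
  have hsplit : (∑ c, γ q c * pd (fun y => pull2 Φ g y a b) c q)
      = (∑ α, ∑ β, ∑ c, γ q c * (pd (fun y => g (Φ y) α β) c q * eF Φ a q α * eF Φ b q β))
        + (∑ α, ∑ β, ∑ c, γ q c * (g (Φ q) α β * (pd (fun y => eF Φ a y α) c q * eF Φ b q β)))
        + ∑ α, ∑ β, ∑ c, γ q c * (g (Φ q) α β * (eF Φ a q α * pd (fun y => eF Φ b y β) c q)) := by
    rw [sum_rot3 (fun (α β : Fin (d+1)) (c : Fin d) => γ q c * (pd (fun y => g (Φ y) α β) c q * eF Φ a q α * eF Φ b q β)),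
      sum_rot3 (fun (α β : Fin (d+1)) (c : Fin d) => γ q c * (g (Φ q) α β * (pd (fun y => eF Φ a y α) c q * eF Φ b q β))),
      sum_rot3 (fun (α β : Fin (d+1)) (c : Fin d) => γ q c * (g (Φ q) α β * (eF Φ a q α * pd (fun y => eF Φ b y β) c q)))]
    rw [← Finset.sum_add_distrib, ← Finset.sum_add_distrib]
    refine Finset.sum_congr rfl fun c _ => ?_
    rw [pdh c]
    rw [← Finset.sum_add_distrib, ← Finset.sum_add_distrib, Finset.mul_sum]
    refine Finset.sum_congr rfl fun α _ => ?_
    rw [← Finset.sum_add_distrib, ← Finset.sum_add_distrib, Finset.mul_sum]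
    exact Finset.sum_congr rfl fun β _ => by ring
  -- piece 1
  have hA : (∑ α, ∑ β, ∑ c, γ q c * (pd (fun y => g (Φ y) α β) c q * eF Φ a q α * eF Φ b q β))
      = ∑ α, ∑ β, ∑ μ, eF Φ a q α * eF Φ b q β * (B (Φ q) μ * pd (fun y => g y α β) μ (Φ q)) := by
    refine Finset.sum_congr rfl fun α _ => Finset.sum_congr rfl fun β _ => ?_
    calc (∑ c, γ q c * (pd (fun y => g (Φ y) α β) c q * eF Φ a q α * eF Φ b q β))
        = ∑ c, ∑ μ, γ q c * eF Φ c q μ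
            * (pd (fun y => g y α β) μ (Φ q) * (eF Φ a q α * eF Φ b q β)) := by
          refine Finset.sum_congr rfl fun c _ => ?_
          rw [pd_comp _ _ _ _ (dAt (hg α β) (Φ q)) (dAtV hΦ q)]
          simp only [Finset.sum_mul, Finset.mul_sum]
          exact Finset.sum_congr rfl fun μ _ => by simp only [eF]; ring
      _ = ∑ μ, (∑ c, γ q c * eF Φ c q μ)
            * (pd (fun y => g y α β) μ (Φ q) * (eF Φ a q α * eF Φ b q β)) := by
          rw [Finset.sum_comm]
          exact Finset.sum_congr rfl fun μ _ => by rw [Finset.sum_mul]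
      _ = ∑ μ, B (Φ q) μ * (pd (fun y => g y α β) μ (Φ q) * (eF Φ a q α * eF Φ b q β)) := by
          refine Finset.sum_congr rfl fun μ _ => ?_
          rw [← rel_expand hrel q μ]
      _ = ∑ μ, eF Φ a q α * eF Φ b q β * (B (Φ q) μ * pd (fun y => g y α β) μ (Φ q)) :=
          Finset.sum_congr rfl fun μ _ => by ring
  -- piece 2
  have hBt : (∑ α, ∑ β, ∑ c, γ q c * (g (Φ q) α β * (pd (fun y => eF Φ a y α) c q * eF Φ b q β)))
        + (∑ c, pull2 Φ g q c b * pd (fun y => γ y c) a q)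
      = ∑ α, ∑ β, ∑ μ, eF Φ a q α * eF Φ b q β
          * (g (Φ q) μ β * pd (fun y => B y μ) α (Φ q)) := by
    have h1 : (∑ c, pull2 Φ g q c b * pd (fun y => γ y c) a q)
        = ∑ α, ∑ β, ∑ c, pd (fun y => γ y c) a q * eF Φ c q α
            * (g (Φ q) α β * eF Φ b q β) := by
      rw [sum_rot3 (fun (α β : Fin (d+1)) (c : Fin d) => pd (fun y => γ y c) a q * eF Φ c q α
            * (g (Φ q) α β * eF Φ b q β))]
      refine Finset.sum_congr rfl fun c _ => ?_
      rw [pull2_eF, Finset.sum_mul]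
      refine Finset.sum_congr rfl fun α _ => ?_
      rw [Finset.sum_mul]
      exact Finset.sum_congr rfl fun β _ => by ring
    have h2 : (∑ α, ∑ β, ∑ c, γ q c * (g (Φ q) α β * (pd (fun y => eF Φ a y α) c q * eF Φ b q β)))
          + (∑ c, pull2 Φ g q c b * pd (fun y => γ y c) a q)
        = ∑ α, ∑ β, ∑ μ, g (Φ q) α β * eF Φ b q β * eF Φ a q μ * pd (fun y => B y α) μ (Φ q) := by
      rw [h1, ← Finset.sum_add_distrib]
      refine Finset.sum_congr rfl fun α _ => ?_
      rw [← Finset.sum_add_distrib]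
      refine Finset.sum_congr rfl fun β _ => ?_
      rw [← Finset.sum_add_distrib]
      calc (∑ c, (γ q c * (g (Φ q) α β * (pd (fun y => eF Φ a y α) c q * eF Φ b q β))
            + pd (fun y => γ y c) a q * eF Φ c q α * (g (Φ q) α β * eF Φ b q β)))
          = (g (Φ q) α β * eF Φ b q β) * ∑ c, (pd (fun y => γ y c) a q * eF Φ c q α
              + γ q c * pd (fun y => eF Φ c y α) a q) := by
            rw [Finset.mul_sum]
            refine Finset.sum_congr rfl fun c _ => ?_
            rw [ef_pd_symm hΦ a c q α]
            ring
        _ = (g (Φ q) α β * eF Φ b q β) * ∑ μ, eF Φ a q μ * pd (fun y => B y α) μ (Φ q) := by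
            rw [← pd_comp_B hg hΦ hB hγ hrel]
        _ = ∑ μ, g (Φ q) α β * eF Φ b q β * eF Φ a q μ * pd (fun y => B y α) μ (Φ q) := by
            rw [Finset.mul_sum]
            exact Finset.sum_congr rfl fun μ _ => by ring
    rw [h2]
    rw [sum_swap13 (fun α β μ => g (Φ q) α β * eF Φ b q β * eF Φ a q μ * pd (fun y => B y α) μ (Φ q))]
    exact Finset.sum_congr rfl fun α _ => Finset.sum_congr rfl fun β _ =>
      Finset.sum_congr rfl fun μ _ => by ring
  -- piece 3
  have hCt : (∑ α, ∑ β, ∑ c, γ q c * (g (Φ q) α β * (eF Φ a q α * pd (fun y => eF Φ b y β) c q)))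
        + (∑ c, pull2 Φ g q a c * pd (fun y => γ y c) b q)
      = ∑ α, ∑ β, ∑ μ, eF Φ a q α * eF Φ b q β
          * (g (Φ q) α μ * pd (fun y => B y μ) β (Φ q)) := by
    have h1 : (∑ c, pull2 Φ g q a c * pd (fun y => γ y c) b q)
        = ∑ α, ∑ β, ∑ c, pd (fun y => γ y c) b q * eF Φ c q β
            * (g (Φ q) α β * eF Φ a q α) := by
      rw [sum_rot3 (fun (α β : Fin (d+1)) (c : Fin d) => pd (fun y => γ y c) b q * eF Φ c q β
            * (g (Φ q) α β * eF Φ a q α))]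
      refine Finset.sum_congr rfl fun c _ => ?_
      rw [pull2_eF, Finset.sum_mul]
      refine Finset.sum_congr rfl fun α _ => ?_
      rw [Finset.sum_mul]
      exact Finset.sum_congr rfl fun β _ => by ring
    have h2 : (∑ α, ∑ β, ∑ c, γ q c * (g (Φ q) α β * (eF Φ a q α * pd (fun y => eF Φ b y β) c q)))
          + (∑ c, pull2 Φ g q a c * pd (fun y => γ y c) b q)
        = ∑ α, ∑ β, ∑ μ, g (Φ q) α β * eF Φ a q α * eF Φ b q μ * pd (fun y => B y β) μ (Φ q) := by
      rw [h1, ← Finset.sum_add_distrib]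
      refine Finset.sum_congr rfl fun α _ => ?_
      rw [← Finset.sum_add_distrib]
      refine Finset.sum_congr rfl fun β _ => ?_
      rw [← Finset.sum_add_distrib]
      calc (∑ c, (γ q c * (g (Φ q) α β * (eF Φ a q α * pd (fun y => eF Φ b y β) c q))
            + pd (fun y => γ y c) b q * eF Φ c q β * (g (Φ q) α β * eF Φ a q α)))
          = (g (Φ q) α β * eF Φ a q α) * ∑ c, (pd (fun y => γ y c) b q * eF Φ c q β
              + γ q c * pd (fun y => eF Φ c y β) b q) := by
            rw [Finset.mul_sum]
            refine Finset.sum_congr rfl fun c _ => ?_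
            rw [ef_pd_symm hΦ b c q β]
            ring
        _ = (g (Φ q) α β * eF Φ a q α) * ∑ μ, eF Φ b q μ * pd (fun y => B y β) μ (Φ q) := by
            rw [← pd_comp_B hg hΦ hB hγ hrel]
        _ = ∑ μ, g (Φ q) α β * eF Φ a q α * eF Φ b q μ * pd (fun y => B y β) μ (Φ q) := by
            rw [Finset.mul_sum]
            exact Finset.sum_congr rfl fun μ _ => by ring
    rw [h2]
    rw [sum_swap23 (fun α β μ => g (Φ q) α β * eF Φ a q α * eF Φ b q μ * pd (fun y => B y β) μ (Φ q))]
    exact Finset.sum_congr rfl fun α _ => Finset.sum_congr rfl fun β _ =>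
      Finset.sum_congr rfl fun μ _ => by ring
  -- expansion of the contracted Lie derivative
  have hLie : αc (Φ q) * pull2 Φ g q a b
      = (∑ α, ∑ β, ∑ μ, eF Φ a q α * eF Φ b q β * (B (Φ q) μ * pd (fun y => g y α β) μ (Φ q)))
        + (∑ α, ∑ β, ∑ μ, eF Φ a q α * eF Φ b q β * (g (Φ q) μ β * pd (fun y => B y μ) α (Φ q)))
        + ∑ α, ∑ β, ∑ μ, eF Φ a q α * eF Φ b q β
            * (g (Φ q) α μ * pd (fun y => B y μ) β (Φ q)) := by
    rw [← Finset.sum_add_distrib, ← Finset.sum_add_distrib, pull2_eF, Finset.mul_sum]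
    refine Finset.sum_congr rfl fun α _ => ?_
    rw [← Finset.sum_add_distrib, ← Finset.sum_add_distrib, Finset.mul_sum]
    refine Finset.sum_congr rfl fun β _ => ?_
    rw [← Finset.sum_add_distrib, ← Finset.sum_add_distrib]
    have h3 := hconf (Φ q) α β
    unfold lieD at h3
    calc αc (Φ q) * (g (Φ q) α β * eF Φ a q α * eF Φ b q β)
        = (eF Φ a q α * eF Φ b q β) * (αc (Φ q) * g (Φ q) α β) := by ring
      _ = (eF Φ a q α * eF Φ b q β) * ∑ μ, (B (Φ q) μ * pd (fun y => g y α β) μ (Φ q)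
            + g (Φ q) μ β * pd (fun y => B y μ) α (Φ q)
            + g (Φ q) α μ * pd (fun y => B y μ) β (Φ q)) := by rw [← h3]
      _ = ∑ μ, (eF Φ a q α * eF Φ b q β * (B (Φ q) μ * pd (fun y => g y α β) μ (Φ q))
            + eF Φ a q α * eF Φ b q β * (g (Φ q) μ β * pd (fun y => B y μ) α (Φ q))
            + eF Φ a q α * eF Φ b q β * (g (Φ q) α μ * pd (fun y => B y μ) β (Φ q))) := by
          rw [Finset.mul_sum]
          exact Finset.sum_congr rfl fun μ _ => by ring
  linarith [hsplit, hA, hBt, hCt, hLie]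

end Side
section Trans
variable {d : ℕ} {g ginv : Pt (d+1) → Fin (d+1) → Fin (d+1) → ℝ}
  {Φ : Pt d → Pt (d+1)} {ℓ : Pt d → Pt (d+1)} {B : Pt (d+1) → Pt (d+1)} {γ : Pt d → Pt d}
  {αc : Pt (d+1) → ℝ}
  (hg : ∀ a b, ContDiff ℝ (⊤ : ℕ∞) fun x => g x a b)
  (hΦ : ContDiff ℝ (⊤ : ℕ∞) Φ)
  (hB : ContDiff ℝ (⊤ : ℕ∞) B)
  (hℓ : ContDiff ℝ (⊤ : ℕ∞) ℓ)
  (hgsymm : ∀ x a b, g x a b = g x b a)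
  (hinv : ∀ x a b, (∑ c, ginv x a c * g x c b) = if a = b then (1:ℝ) else 0)
  (hconf : ∀ x a b, lieD g B x a b = αc x * g x a b)
  (hrel : ∀ q, fderiv ℝ Φ q (γ q) = B (Φ q))

include hg hΦ hB hℓ hgsymm hinv hconf hrel in
/-- Transversal component of `d(flat B)` along `Σ`. -/
lemma dext_transversal (a : Fin d) (p : Pt d) :
    dext (flat g B) (Φ p) (ℓ p) (eF Φ a p)
      = αc (Φ p) * gdot g (Φ p) (ℓ p) (eF Φ a p)
        - 2 * pd (fun q => ip (flat g B (Φ q)) (ℓ q)) a p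
        + 2 * ∑ c, γ p c * Hgen g ginv Φ ℓ a c p := by
  set x := Φ p with hxdef
  have hpdg : ∀ (μ : Fin (d+1)) (a' b' : Fin (d+1)),
      pd (fun y => g y a' b') μ x = pd (fun y => g y b' a') μ x :=
    fun μ a' b' => pd_congr (fun y => hgsymm y a' b') μ x
  have hdl : ∀ ρ : Fin (d+1), DifferentiableAt ℝ (fun y => ℓ y ρ) p :=
    fun ρ => dAt (cd_pi hℓ ρ) p
  -- canonical pieces
  set D1c := ∑ ν, ∑ μ, ∑ e, B x ν * eF Φ a p μ * ℓ p e * pd (fun y => g y e ν) μ x with hD1c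
  set D2 := ∑ ν, ∑ ρ, B x ν * g x ν ρ * pd (fun y => ℓ y ρ) a p with hD2
  set D3 := ∑ ν, ∑ μ, ∑ e, B x ν * eF Φ a p μ * ℓ p e * (pd (fun y => g y e μ) ν x
      + pd (fun y => g y e ν) μ x - pd (fun y => g y μ ν) e x) with hD3
  set P2 := ∑ α, ∑ β, ∑ e, ℓ p α * eF Φ a p β * (B x e * (pd (fun y => g y β e) α x
      + pd (fun y => g y α e) β x - pd (fun y => g y α β) e x)) with hP2
  set P3 := ∑ α, ℓ p α * pd (fun q => flat g B (Φ q) α) a p with hP3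
  -- Step 0: decomposition of dext using the conformal Killing identity
  have h0 : dext (flat g B) x (ℓ p) (eF Φ a p)
      = αc x * gdot g x (ℓ p) (eF Φ a p) + P2 - 2 * P3 := by
    have e1 : dext (flat g B) x (ℓ p) (eF Φ a p)
        = (∑ α, ∑ β, ℓ p α * eF Φ a p β * (αc x * g x α β))
          + (∑ α, ∑ β, ∑ e, ℓ p α * eF Φ a p β * (B x e * (pd (fun y => g y β e) α x
              + pd (fun y => g y α e) β x - pd (fun y => g y α β) e x)))
          - ∑ α, ∑ β, 2 * (ℓ p α * (eF Φ a p β * pd (fun y => flat g B y α) β x)) := by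
      unfold dext
      rw [← Finset.sum_add_distrib, ← Finset.sum_sub_distrib]
      refine Finset.sum_congr rfl fun α _ => ?_
      rw [← Finset.sum_add_distrib, ← Finset.sum_sub_distrib]
      refine Finset.sum_congr rfl fun β _ => ?_
      have hs := conf_symm_pd hg hB hgsymm hconf x α β
      have e2 : pd (fun y => flat g B y β) α x - pd (fun y => flat g B y α) β x
          = αc x * g x α β + (∑ e, B x e * (pd (fun y => g y β e) α x
              + pd (fun y => g y α e) β x - pd (fun y => g y α β) e x))
            - 2 * pd (fun y => flat g B y α) β x := by linarith [hs]
      rw [e2, mul_sub, mul_add, Finset.mul_sum]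
      ring
    have e3 : (∑ α, ∑ β, ℓ p α * eF Φ a p β * (αc x * g x α β))
        = αc x * gdot g x (ℓ p) (eF Φ a p) := by
      unfold gdot
      rw [Finset.mul_sum]
      refine Finset.sum_congr rfl fun α _ => ?_
      rw [Finset.mul_sum]
      exact Finset.sum_congr rfl fun β _ => by ring
    have e4 : (∑ α, ∑ β, 2 * (ℓ p α * (eF Φ a p β * pd (fun y => flat g B y α) β x)))
        = 2 * P3 := by
      rw [hP3, Finset.mul_sum]
      refine Finset.sum_congr rfl fun α _ => ?_
      rw [pd_flat_comp hg hΦ hB α a p, Finset.mul_sum, Finset.mul_sum]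
    rw [e1, e3, e4, hP2]
  -- Step 1: derivative of `ip (flat B ∘ Φ) ℓ`
  have hW : pd (fun q => ip (flat g B (Φ q)) (ℓ q)) a p
      = P3 + ∑ α, flat g B x α * pd (fun y => ℓ y α) a p := by
    have h1 : ∀ α : Fin (d+1), DifferentiableAt ℝ (fun q => flat g B (Φ q) α) p :=
      fun α => dAt (cd_comp_phi hΦ (cd_flat hg hB α)) p
    rw [show (fun q => ip (flat g B (Φ q)) (ℓ q))
        = (fun q => ∑ α, flat g B (Φ q) α * ℓ q α) from rfl]
    rw [pd_sum _ _ _ _ (fun α _ => (h1 α).fun_mul (hdl α))]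
    rw [hP3, ← Finset.sum_add_distrib]
    refine Finset.sum_congr rfl fun α _ => ?_
    rw [pd_mul _ _ (h1 α) (hdl α), ← hxdef]
    ring
  -- Step 2: W equals D2
  have hWD2 : (∑ α, flat g B x α * pd (fun y => ℓ y α) a p) = D2 := by
    rw [hD2]
    rw [show (∑ α, flat g B x α * pd (fun y => ℓ y α) a p)
        = ∑ α, ∑ ν, g x α ν * B x ν * pd (fun y => ℓ y α) a p from by
      refine Finset.sum_congr rfl fun α _ => ?_
      unfold flat
      rw [Finset.sum_mul]]
    rw [Finset.sum_comm]
    refine Finset.sum_congr rfl fun ν _ => Finset.sum_congr rfl fun ρ _ => ?_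
    rw [hgsymm x ρ ν]
    ring
  -- Step 3: P2 = 2*D1c - D3
  have hP2D : P2 = 2 * D1c - D3 := by
    rw [hP2, hD1c, hD3]
    rw [sum_swap13 (fun (α β e : Fin (d+1)) => ℓ p α * eF Φ a p β * (B x e
        * (pd (fun y => g y β e) α x + pd (fun y => g y α e) β x - pd (fun y => g y α β) e x)))]
    rw [Finset.mul_sum, ← Finset.sum_sub_distrib]
    refine Finset.sum_congr rfl fun ν _ => ?_
    rw [Finset.mul_sum, ← Finset.sum_sub_distrib]
    refine Finset.sum_congr rfl fun μ _ => ?_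
    rw [Finset.mul_sum, ← Finset.sum_sub_distrib]
    refine Finset.sum_congr rfl fun e _ => ?_
    ring
  -- Step 4: expansion of the Hgen contraction
  have hHgen : (∑ c, γ p c * Hgen g ginv Φ ℓ a c p) = D1c + D2 - (1/2) * D3 := by
    have hflatS : ∀ ν : Fin (d+1), pd (fun q => flatS g Φ ℓ q ν) a p
        = ∑ ρ, ((∑ μ, eF Φ a p μ * pd (fun y => g y ν ρ) μ x) * ℓ p ρ
            + g x ν ρ * pd (fun y => ℓ y ρ) a p) := by
      intro ν
      rw [show (fun q => flatS g Φ ℓ q ν) = (fun q => ∑ ρ, g (Φ q) ν ρ * ℓ q ρ) from rfl]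
      rw [pd_sum _ _ _ _ (fun ρ _ => (dAt (cd_comp_phi hΦ (hg ν ρ)) p).fun_mul (hdl ρ))]
      refine Finset.sum_congr rfl fun ρ _ => ?_
      rw [pd_mul _ _ (dAt (cd_comp_phi hΦ (hg ν ρ)) p) (hdl ρ)]
      rw [pd_comp _ _ _ _ (dAt (hg ν ρ) x) (dAtV hΦ p)]
      rfl
    have hchr : ∀ ν : Fin (d+1), (∑ c', (∑ μ, eF Φ a p μ * Chr g ginv c' μ ν x)
          * flatS g Φ ℓ p c')
        = ∑ μ, eF Φ a p μ * ((1/2) * ∑ e, ℓ p e * (pd (fun y => g y e μ) ν x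
            + pd (fun y => g y e ν) μ x - pd (fun y => g y μ ν) e x)) := by
      intro ν
      calc (∑ c', (∑ μ, eF Φ a p μ * Chr g ginv c' μ ν x) * flatS g Φ ℓ p c')
          = ∑ c', ∑ μ, eF Φ a p μ * Chr g ginv c' μ ν x * flatS g Φ ℓ p c' := by
            refine Finset.sum_congr rfl fun c' _ => ?_
            rw [Finset.sum_mul]
        _ = ∑ μ, ∑ c', eF Φ a p μ * Chr g ginv c' μ ν x * flatS g Φ ℓ p c' := Finset.sum_comm
        _ = ∑ μ, eF Φ a p μ * ∑ c', Chr g ginv c' μ ν x * flatS g Φ ℓ p c' := by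
            refine Finset.sum_congr rfl fun μ _ => ?_
            rw [Finset.mul_sum]
            exact Finset.sum_congr rfl fun c' _ => by ring
        _ = ∑ μ, eF Φ a p μ * ((1/2) * ∑ e, ℓ p e * (pd (fun y => g y e μ) ν x
            + pd (fun y => g y e ν) μ x - pd (fun y => g y μ ν) e x)) := by
            refine Finset.sum_congr rfl fun μ _ => ?_
            rw [show flatS g Φ ℓ p = fun c' => ∑ ρ, g x c' ρ * ℓ p ρ from rfl]
            rw [chr_contract hgsymm hinv x (ℓ p) μ ν]
    have hgen1 : ∀ c : Fin d, Hgen g ginv Φ ℓ a c p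
        = ∑ ν, eF Φ c p ν * ((∑ ρ, ((∑ μ, eF Φ a p μ * pd (fun y => g y ν ρ) μ x) * ℓ p ρ
            + g x ν ρ * pd (fun y => ℓ y ρ) a p))
          - ∑ μ, eF Φ a p μ * ((1/2) * ∑ e, ℓ p e * (pd (fun y => g y e μ) ν x
              + pd (fun y => g y e ν) μ x - pd (fun y => g y μ ν) e x))) := by
      intro c
      unfold Hgen
      refine Finset.sum_congr rfl fun ν _ => ?_
      rw [hflatS ν, hchr ν]
    have hBsum : ∀ T : Fin (d+1) → ℝ,
        (∑ c, γ p c * ∑ ν, eF Φ c p ν * T ν) = ∑ ν, B x ν * T ν := by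
      intro T
      rw [show (∑ c, γ p c * ∑ ν, eF Φ c p ν * T ν)
          = ∑ c, ∑ ν, γ p c * eF Φ c p ν * T ν from
        Finset.sum_congr rfl fun c _ => by
          rw [Finset.mul_sum]; exact Finset.sum_congr rfl fun ν _ => by ring]
      rw [Finset.sum_comm]
      refine Finset.sum_congr rfl fun ν _ => ?_
      rw [hxdef, rel_expand hrel p ν, Finset.sum_mul]
    rw [show (∑ c, γ p c * Hgen g ginv Φ ℓ a c p)
        = ∑ c, γ p c * ∑ ν, eF Φ c p ν * ((∑ ρ, ((∑ μ, eF Φ a p μ * pd (fun y => g y ν ρ) μ x) * ℓ p ρ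
            + g x ν ρ * pd (fun y => ℓ y ρ) a p))
          - ∑ μ, eF Φ a p μ * ((1/2) * ∑ e, ℓ p e * (pd (fun y => g y e μ) ν x
              + pd (fun y => g y e ν) μ x - pd (fun y => g y μ ν) e x))) from
      Finset.sum_congr rfl fun c _ => by rw [hgen1 c]]
    rw [hBsum]
    -- split into the three canonical pieces
    have split1 : (∑ ν, B x ν * ∑ ρ, ((∑ μ, eF Φ a p μ * pd (fun y => g y ν ρ) μ x) * ℓ p ρ
          + g x ν ρ * pd (fun y => ℓ y ρ) a p))
        = D1c + D2 := by
      rw [hD1c, hD2, ← Finset.sum_add_distrib]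
      refine Finset.sum_congr rfl fun ν _ => ?_
      have s1 : B x ν * (∑ ρ, ((∑ μ, eF Φ a p μ * pd (fun y => g y ν ρ) μ x) * ℓ p ρ
            + g x ν ρ * pd (fun y => ℓ y ρ) a p))
          = (∑ ρ, B x ν * ((∑ μ, eF Φ a p μ * pd (fun y => g y ν ρ) μ x) * ℓ p ρ))
            + ∑ ρ, B x ν * (g x ν ρ * pd (fun y => ℓ y ρ) a p) := by
        rw [Finset.mul_sum, ← Finset.sum_add_distrib]
        exact Finset.sum_congr rfl fun ρ _ => by ring
      rw [s1]
      congr 1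
      · calc (∑ ρ, B x ν * ((∑ μ, eF Φ a p μ * pd (fun y => g y ν ρ) μ x) * ℓ p ρ))
            = ∑ ρ, ∑ μ, B x ν * eF Φ a p μ * ℓ p ρ * pd (fun y => g y ν ρ) μ x := by
              refine Finset.sum_congr rfl fun ρ _ => ?_
              rw [Finset.sum_mul, Finset.mul_sum]
              exact Finset.sum_congr rfl fun μ _ => by ring
          _ = ∑ μ, ∑ ρ, B x ν * eF Φ a p μ * ℓ p ρ * pd (fun y => g y ν ρ) μ x :=
              Finset.sum_comm
          _ = ∑ μ, ∑ e, B x ν * eF Φ a p μ * ℓ p e * pd (fun y => g y e ν) μ x := by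
              refine Finset.sum_congr rfl fun μ _ => Finset.sum_congr rfl fun ρ _ => ?_
              rw [hpdg μ ν ρ]
      · exact Finset.sum_congr rfl fun ρ _ => by ring
    have split2 : (∑ ν, B x ν * ∑ μ, eF Φ a p μ * ((1/2) * ∑ e, ℓ p e * (pd (fun y => g y e μ) ν x
          + pd (fun y => g y e ν) μ x - pd (fun y => g y μ ν) e x)))
        = (1/2) * D3 := by
      rw [hD3]
      simp only [Finset.mul_sum]
      refine Finset.sum_congr rfl fun ν _ => Finset.sum_congr rfl fun μ _ =>
        Finset.sum_congr rfl fun e _ => by ring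
    calc (∑ ν, B x ν * ((∑ ρ, ((∑ μ, eF Φ a p μ * pd (fun y => g y ν ρ) μ x) * ℓ p ρ
            + g x ν ρ * pd (fun y => ℓ y ρ) a p))
          - ∑ μ, eF Φ a p μ * ((1/2) * ∑ e, ℓ p e * (pd (fun y => g y e μ) ν x
              + pd (fun y => g y e ν) μ x - pd (fun y => g y μ ν) e x))))
        = (∑ ν, B x ν * ∑ ρ, ((∑ μ, eF Φ a p μ * pd (fun y => g y ν ρ) μ x) * ℓ p ρ
            + g x ν ρ * pd (fun y => ℓ y ρ) a p))
          - ∑ ν, B x ν * ∑ μ, eF Φ a p μ * ((1/2) * ∑ e, ℓ p e * (pd (fun y => g y e μ) ν x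
              + pd (fun y => g y e ν) μ x - pd (fun y => g y μ ν) e x)) := by
          rw [← Finset.sum_sub_distrib]
          exact Finset.sum_congr rfl fun ν _ => by ring
      _ = D1c + D2 - (1/2) * D3 := by rw [split1, split2]
  linarith [h0, hW, hWD2, hP2D, hHgen]

end Trans
/-! ### The 4-form is alternating -/

lemma form4_alt {n : ℕ} (g : Pt n → Fin n → Fin n → ℝ) (A B : Pt n → Pt n) (x : Pt n)
    (u : Fin 4 → Fin n → ℝ) (i j : Fin 4) (hij : i ≠ j) (huij : u i = u j) :
    form4 g A B x u = 0 := by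
  unfold form4
  set f : Equiv.Perm (Fin 4) → ℝ := fun σ => ((Equiv.Perm.sign σ : ℤ) : ℝ) *
    (ip (flat g A x) (u (σ 0)) * ip (flat g B x) (u (σ 1)) *
      dext (flat g B) x (u (σ 2)) (u (σ 3))) with hf
  have husw : ∀ m : Fin 4, u (Equiv.swap i j m) = u m := by
    intro m
    rcases eq_or_ne m i with rfl | hmi
    · rw [Equiv.swap_apply_left, ← huij]
    rcases eq_or_ne m j with rfl | hmj
    · rw [Equiv.swap_apply_right, huij]
    · rw [Equiv.swap_apply_of_ne_of_ne hmi hmj]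
  have key : ∀ σ : Equiv.Perm (Fin 4), f (Equiv.swap i j * σ) = - f σ := by
    intro σ
    rw [hf]
    simp only [Equiv.Perm.mul_apply, Equiv.Perm.sign_mul, Equiv.Perm.sign_swap hij]
    rw [husw, husw, husw, husw]
    push_cast
    ring
  have hsum : (∑ σ : Equiv.Perm (Fin 4), f σ) = - ∑ σ : Equiv.Perm (Fin 4), f σ := by
    calc (∑ σ : Equiv.Perm (Fin 4), f σ)
        = ∑ σ : Equiv.Perm (Fin 4), f (Equiv.swap i j * σ) :=
          (Fintype.sum_equiv (Equiv.mulLeft (Equiv.swap i j))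
            (fun σ => f (Equiv.swap i j * σ)) f (fun σ => rfl)).symm
      _ = ∑ σ : Equiv.Perm (Fin 4), - f σ := Finset.sum_congr rfl fun σ _ => key σ
      _ = - ∑ σ : Equiv.Perm (Fin 4), f σ := by rw [Finset.sum_neg_distrib]
  have : (∑ σ : Equiv.Perm (Fin 4), f σ) = 0 := by linarith
  rw [this]
  ring

/-! ### Master lemma -/

theorem master {d : ℕ}
    (gp ginvp gm ginvm : Pt (d+1) → Fin (d+1) → Fin (d+1) → ℝ)
    (Φp Φm : Pt d → Pt (d+1)) (ℓp ℓm : Pt d → Pt (d+1))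
    (Ap Bp Am Bm : Pt (d+1) → Pt (d+1)) (γA γB : Pt d → Pt d)
    (αp αm : Pt (d+1) → ℝ)
    (hgp : ∀ a b, ContDiff ℝ (⊤ : ℕ∞) fun x => gp x a b)
    (hgm : ∀ a b, ContDiff ℝ (⊤ : ℕ∞) fun x => gm x a b)
    (hgpsymm : ∀ x a b, gp x a b = gp x b a)
    (hgmsymm : ∀ x a b, gm x a b = gm x b a)
    (hinvp : ∀ x a b, (∑ c, ginvp x a c * gp x c b) = if a = b then (1:ℝ) else 0)
    (hinvm : ∀ x a b, (∑ c, ginvm x a c * gm x c b) = if a = b then (1:ℝ) else 0)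
    (hΦp : ContDiff ℝ (⊤ : ℕ∞) Φp) (hΦm : ContDiff ℝ (⊤ : ℕ∞) Φm)
    (hℓp : ContDiff ℝ (⊤ : ℕ∞) ℓp) (hℓm : ContDiff ℝ (⊤ : ℕ∞) ℓm)
    (hBp : ContDiff ℝ (⊤ : ℕ∞) Bp) (hBm : ContDiff ℝ (⊤ : ℕ∞) Bm)
    (hγB : ContDiff ℝ (⊤ : ℕ∞) γB)
    (hmatch : ∀ p a b, pull2 Φp gp p a b = pull2 Φm gm p a b)
    (hℓe : ∀ p a, gdot gp (Φp p) (ℓp p) (eF Φp a p) = gdot gm (Φm p) (ℓm p) (eF Φm a p))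
    (hH : ∀ p a b, Hgen gp ginvp Φp ℓp a b p = Hgen gm ginvm Φm ℓm a b p)
    (hrelAp : ∀ p, fderiv ℝ Φp p (γA p) = Ap (Φp p))
    (hrelAm : ∀ p, fderiv ℝ Φm p (γA p) = Am (Φm p))
    (hrelBp : ∀ p, fderiv ℝ Φp p (γB p) = Bp (Φp p))
    (hrelBm : ∀ p, fderiv ℝ Φm p (γB p) = Bm (Φm p))
    (hconfBp : ∀ x a b, lieD gp Bp x a b = αp x * gp x a b)
    (hconfBm : ∀ x a b, lieD gm Bm x a b = αm x * gm x a b) :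
    ∀ (p : Pt d) (pick : Fin 4 → Option (Fin d)),
      form4 gp Ap Bp (Φp p) (fun i => frameV Φp ℓp p (pick i))
        = form4 gm Am Bm (Φm p) (fun i => frameV Φm ℓm p (pick i)) := by
  intro p pick
  by_cases hinj : Function.Injective pick
  case neg =>
    obtain ⟨i, j, hpij, hij⟩ := Function.not_injective_iff.mp hinj
    rw [form4_alt gp Ap Bp (Φp p) _ i j hij (congrArg (frameV Φp ℓp p) hpij),
      form4_alt gm Am Bm (Φm p) _ i j hij (congrArg (frameV Φm ℓm p) hpij)]
  case pos =>
  -- matched scalar quantities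
  have hIA : ∀ o : Option (Fin d), ip (flat gp Ap (Φp p)) (frameV Φp ℓp p o)
      = ip (flat gm Am (Φm p)) (frameV Φm ℓm p o) := by
    rintro (_ | b)
    · show ip (flat gp Ap (Φp p)) (ℓp p) = ip (flat gm Am (Φm p)) (ℓm p)
      rw [ipflat_l hrelAp p, ipflat_l hrelAm p]
      exact Finset.sum_congr rfl fun c _ => by rw [hℓe p c]
    · show ip (flat gp Ap (Φp p)) (eF Φp b p) = ip (flat gm Am (Φm p)) (eF Φm b p)
      rw [ipflat_e hgpsymm hrelAp p b, ipflat_e hgmsymm hrelAm p b]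
      exact Finset.sum_congr rfl fun c _ => by rw [hmatch p c b]
  have hIB : ∀ o : Option (Fin d), ip (flat gp Bp (Φp p)) (frameV Φp ℓp p o)
      = ip (flat gm Bm (Φm p)) (frameV Φm ℓm p o) := by
    rintro (_ | b)
    · show ip (flat gp Bp (Φp p)) (ℓp p) = ip (flat gm Bm (Φm p)) (ℓm p)
      rw [ipflat_l hrelBp p, ipflat_l hrelBm p]
      exact Finset.sum_congr rfl fun c _ => by rw [hℓe p c]
    · show ip (flat gp Bp (Φp p)) (eF Φp b p) = ip (flat gm Bm (Φm p)) (eF Φm b p)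
      rw [ipflat_e hgpsymm hrelBp p b, ipflat_e hgmsymm hrelBm p b]
      exact Finset.sum_congr rfl fun c _ => by rw [hmatch p c b]
  -- tangential dext matches
  have hfunB : ∀ b : Fin d, (fun q => ip (flat gp Bp (Φp q)) (eF Φp b q))
      = (fun q => ip (flat gm Bm (Φm q)) (eF Φm b q)) := by
    intro b
    funext q
    rw [ipflat_e hgpsymm hrelBp q b, ipflat_e hgmsymm hrelBm q b]
    exact Finset.sum_congr rfl fun c _ => by rw [hmatch q c b]
  have hDee : ∀ a b : Fin d, dext (flat gp Bp) (Φp p) (eF Φp a p) (eF Φp b p)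
      = dext (flat gm Bm) (Φm p) (eF Φm a p) (eF Φm b p) := by
    intro a b
    rw [dext_tangent hgp hΦp hBp a b p, dext_tangent hgm hΦm hBm a b p,
      hfunB a, hfunB b]
  -- transversal dext: jump proportional to the conformal-factor jump
  have hLbfun : (fun q => ip (flat gp Bp (Φp q)) (ℓp q))
      = (fun q => ip (flat gm Bm (Φm q)) (ℓm q)) := by
    funext q
    rw [ipflat_l hrelBp q, ipflat_l hrelBm q]
    exact Finset.sum_congr rfl fun c _ => by rw [hℓe q c]
  have hDle : ∀ a : Fin d, dext (flat gp Bp) (Φp p) (ℓp p) (eF Φp a p)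
      = dext (flat gm Bm) (Φm p) (ℓm p) (eF Φm a p)
        + (αp (Φp p) - αm (Φm p)) * gdot gp (Φp p) (ℓp p) (eF Φp a p) := by
    intro a
    rw [dext_transversal hgp hΦp hBp hℓp hgpsymm hinvp hconfBp hrelBp a p,
      dext_transversal hgm hΦm hBm hℓm hgmsymm hinvm hconfBm hrelBm a p]
    rw [← hLbfun, ← hℓe p a]
    rw [show (∑ c, γB p c * Hgen gm ginvm Φm ℓm a c p)
        = ∑ c, γB p c * Hgen gp ginvp Φp ℓp a c p from
      Finset.sum_congr rfl fun c _ => by rw [hH p a c]]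
    ring
  -- the conformal-factor jump annihilates the first fundamental form
  have halpha : ∀ a b : Fin d, (αp (Φp p) - αm (Φm p)) * pull2 Φp gp p a b = 0 := by
    intro a b
    have h1 := pullback_conf hgp hΦp hBp hγB hrelBp hconfBp p a b
    have h2 := pullback_conf hgm hΦm hBm hγB hrelBm hconfBm p a b
    simp only [← hmatch] at h2
    linear_combination h1 - h2
  have hIBzero : ∀ b : Fin d,
      ip (flat gm Bm (Φm p)) (eF Φm b p) * (αp (Φp p) - αm (Φm p)) = 0 := by
    intro b
    have hIBb : ip (flat gp Bp (Φp p)) (eF Φp b p)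
        = ip (flat gm Bm (Φm p)) (eF Φm b p) := hIB (some b)
    rw [← hIBb]
    rw [ipflat_e hgpsymm hrelBp p b, Finset.sum_mul]
    refine Finset.sum_eq_zero fun c _ => ?_
    linear_combination γB p c * halpha c b
  -- per-permutation comparison
  unfold form4
  congr 1
  refine Finset.sum_congr rfl fun σ _ => ?_
  show ((Equiv.Perm.sign σ : ℤ) : ℝ) *
      (ip (flat gp Ap (Φp p)) (frameV Φp ℓp p (pick (σ 0))) *
        ip (flat gp Bp (Φp p)) (frameV Φp ℓp p (pick (σ 1))) *
        dext (flat gp Bp) (Φp p) (frameV Φp ℓp p (pick (σ 2))) (frameV Φp ℓp p (pick (σ 3))))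
    = ((Equiv.Perm.sign σ : ℤ) : ℝ) *
      (ip (flat gm Am (Φm p)) (frameV Φm ℓm p (pick (σ 0))) *
        ip (flat gm Bm (Φm p)) (frameV Φm ℓm p (pick (σ 1))) *
        dext (flat gm Bm) (Φm p) (frameV Φm ℓm p (pick (σ 2))) (frameV Φm ℓm p (pick (σ 3))))
  rw [hIA (pick (σ 0)), hIB (pick (σ 1))]
  rcases h2 : pick (σ 2) with _ | a2 <;> rcases h3 : pick (σ 3) with _ | a3
  -- (none, none)
  · show _ * (_ * _ * dext (flat gp Bp) (Φp p) (ℓp p) (ℓp p))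
      = _ * (_ * _ * dext (flat gm Bm) (Φm p) (ℓm p) (ℓm p))
    rw [dext_self, dext_self]
  -- (none, some a3)
  · have hσ1 : ∃ b1, pick (σ 1) = some b1 := by
      rcases hh : pick (σ 1) with _ | b1
      · have h12 : σ 1 = σ 2 := hinj (hh.trans h2.symm)
        exact absurd (σ.injective h12) (by decide)
      · exact ⟨b1, rfl⟩
    obtain ⟨b1, hb1⟩ := hσ1
    rw [hb1]
    show ((Equiv.Perm.sign σ : ℤ) : ℝ) *
        (ip (flat gm Am (Φm p)) (frameV Φm ℓm p (pick (σ 0))) *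
          ip (flat gm Bm (Φm p)) (eF Φm b1 p) *
          dext (flat gp Bp) (Φp p) (ℓp p) (eF Φp a3 p))
      = ((Equiv.Perm.sign σ : ℤ) : ℝ) *
        (ip (flat gm Am (Φm p)) (frameV Φm ℓm p (pick (σ 0))) *
          ip (flat gm Bm (Φm p)) (eF Φm b1 p) *
          dext (flat gm Bm) (Φm p) (ℓm p) (eF Φm a3 p))
    linear_combination
      (((Equiv.Perm.sign σ : ℤ) : ℝ) * ip (flat gm Am (Φm p)) (frameV Φm ℓm p (pick (σ 0)))
        * ip (flat gm Bm (Φm p)) (eF Φm b1 p)) * hDle a3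
      + (((Equiv.Perm.sign σ : ℤ) : ℝ) * ip (flat gm Am (Φm p)) (frameV Φm ℓm p (pick (σ 0)))
        * gdot gp (Φp p) (ℓp p) (eF Φp a3 p)) * hIBzero b1
  -- (some a2, none)
  · have hσ1 : ∃ b1, pick (σ 1) = some b1 := by
      rcases hh : pick (σ 1) with _ | b1
      · have h13 : σ 1 = σ 3 := hinj (hh.trans h3.symm)
        exact absurd (σ.injective h13) (by decide)
      · exact ⟨b1, rfl⟩
    obtain ⟨b1, hb1⟩ := hσ1
    rw [hb1]
    have hant_p : dext (flat gp Bp) (Φp p) (eF Φp a2 p) (ℓp p)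
        = - dext (flat gp Bp) (Φp p) (ℓp p) (eF Φp a2 p) := dext_antisym _ _ _ _
    have hant_m : dext (flat gm Bm) (Φm p) (eF Φm a2 p) (ℓm p)
        = - dext (flat gm Bm) (Φm p) (ℓm p) (eF Φm a2 p) := dext_antisym _ _ _ _
    show ((Equiv.Perm.sign σ : ℤ) : ℝ) *
        (ip (flat gm Am (Φm p)) (frameV Φm ℓm p (pick (σ 0))) *
          ip (flat gm Bm (Φm p)) (eF Φm b1 p) *
          dext (flat gp Bp) (Φp p) (eF Φp a2 p) (ℓp p))
      = ((Equiv.Perm.sign σ : ℤ) : ℝ) *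
        (ip (flat gm Am (Φm p)) (frameV Φm ℓm p (pick (σ 0))) *
          ip (flat gm Bm (Φm p)) (eF Φm b1 p) *
          dext (flat gm Bm) (Φm p) (eF Φm a2 p) (ℓm p))
    rw [hant_p, hant_m]
    linear_combination
      (-(((Equiv.Perm.sign σ : ℤ) : ℝ) * ip (flat gm Am (Φm p)) (frameV Φm ℓm p (pick (σ 0)))
        * ip (flat gm Bm (Φm p)) (eF Φm b1 p))) * hDle a2
      + (-(((Equiv.Perm.sign σ : ℤ) : ℝ) * ip (flat gm Am (Φm p)) (frameV Φm ℓm p (pick (σ 0)))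
        * gdot gp (Φp p) (ℓp p) (eF Φp a2 p))) * hIBzero b1
  -- (some a2, some a3)
  · show _ * (_ * _ * dext (flat gp Bp) (Φp p) (eF Φp a2 p) (eF Φp a3 p))
      = _ * (_ * _ * dext (flat gm Bm) (Φm p) (eF Φm a2 p) (eF Φm a3 p))
    rw [hDee a2 a3]

/-- Theorem 1 of the paper: in a matching preserving a two-dimensional
conformal group, with all junction conditions satisfied, the 4-forms `η ∧ ξ ∧ dξ` and
`ξ ∧ η ∧ dη` (indices lowered with the metric) agree on the matching hypersurface,
i.e. on the identified frame `{ℓ, e_a}`. -/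
theorem four_forms_agree_on_matching {d : ℕ}
    (gp ginvp gm ginvm : Pt (d+1) → Fin (d+1) → Fin (d+1) → ℝ)
    (Φp Φm : Pt d → Pt (d+1)) (ℓp ℓm : Pt d → Pt (d+1))
    (np nm : Pt d → Fin (d+1) → ℝ) (wp wm : Fin d → Pt d → Fin (d+1) → ℝ)
    (ξp ηp ξm ηm : Pt (d+1) → Pt (d+1)) (γ₁ γ₂ : Pt d → Pt d)
    (αξp αξm αηp αηm : Pt (d+1) → ℝ)
    (hgp : ∀ a b, ContDiff ℝ (⊤ : ℕ∞) fun x => gp x a b)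
    (hgm : ∀ a b, ContDiff ℝ (⊤ : ℕ∞) fun x => gm x a b)
    (hginvp : ∀ a b, ContDiff ℝ (⊤ : ℕ∞) fun x => ginvp x a b)
    (hginvm : ∀ a b, ContDiff ℝ (⊤ : ℕ∞) fun x => ginvm x a b)
    (hgpsymm : ∀ x a b, gp x a b = gp x b a)
    (hgmsymm : ∀ x a b, gm x a b = gm x b a)
    (hinvp : ∀ x a b, (∑ c, ginvp x a c * gp x c b) = if a = b then (1:ℝ) else 0)
    (hinvm : ∀ x a b, (∑ c, ginvm x a c * gm x c b) = if a = b then (1:ℝ) else 0)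
    (hΦp : ContDiff ℝ (⊤ : ℕ∞) Φp) (hΦpinj : Function.Injective Φp)
    (hΦpimm : ∀ p, Function.Injective (fderiv ℝ Φp p))
    (hΦm : ContDiff ℝ (⊤ : ℕ∞) Φm) (hΦminj : Function.Injective Φm)
    (hΦmimm : ∀ p, Function.Injective (fderiv ℝ Φm p))
    (hℓp : ContDiff ℝ (⊤ : ℕ∞) ℓp) (hℓm : ContDiff ℝ (⊤ : ℕ∞) ℓm)
    (hξp : ContDiff ℝ (⊤ : ℕ∞) ξp) (hξm : ContDiff ℝ (⊤ : ℕ∞) ξm)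
    (hηp : ContDiff ℝ (⊤ : ℕ∞) ηp) (hηm : ContDiff ℝ (⊤ : ℕ∞) ηm)
    (hγ₁ : ContDiff ℝ (⊤ : ℕ∞) γ₁) (hγ₂ : ContDiff ℝ (⊤ : ℕ∞) γ₂)
    -- preliminary junction conditions
    (hmatch : ∀ p a b, pull2 Φp gp p a b = pull2 Φm gm p a b)
    -- duality of the coframes with the rigged frames on both sides
    (hnℓp : ∀ p, ip (np p) (ℓp p) = 1) (hnep : ∀ p a, ip (np p) (eF Φp a p) = 0)
    (hwℓp : ∀ p a, ip (wp a p) (ℓp p) = 0)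
    (hwep : ∀ p a b, ip (wp a p) (eF Φp b p) = if a = b then (1:ℝ) else 0)
    (hnℓm : ∀ p, ip (nm p) (ℓm p) = 1) (hnem : ∀ p a, ip (nm p) (eF Φm a p) = 0)
    (hwℓm : ∀ p a, ip (wm a p) (ℓm p) = 0)
    (hwem : ∀ p a b, ip (wm a p) (eF Φm b p) = if a = b then (1:ℝ) else 0)
    -- identification of the riggings
    (hℓnorm : ∀ p, gdot gp (Φp p) (ℓp p) (ℓp p) = gdot gm (Φm p) (ℓm p) (ℓm p))
    (hℓe : ∀ p a, gdot gp (Φp p) (ℓp p) (eF Φp a p) = gdot gm (Φm p) (ℓm p) (eF Φm a p))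
    -- junction conditions: equal generalized second fundamental forms
    (hH : ∀ p a b, Hgen gp ginvp Φp ℓp a b p = Hgen gm ginvm Φm ℓm a b p)
    -- generators Φ^±-related to the common vector fields γ₁, γ₂ on σ
    (hrelξp : ∀ p, fderiv ℝ Φp p (γ₁ p) = ξp (Φp p))
    (hrelξm : ∀ p, fderiv ℝ Φm p (γ₁ p) = ξm (Φm p))
    (hrelηp : ∀ p, fderiv ℝ Φp p (γ₂ p) = ηp (Φp p))
    (hrelηm : ∀ p, fderiv ℝ Φm p (γ₂ p) = ηm (Φm p))
    -- the generators are conformal Killing fields on both sides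
    (hconfξp : ∀ x a b, lieD gp ξp x a b = αξp x * gp x a b)
    (hconfξm : ∀ x a b, lieD gm ξm x a b = αξm x * gm x a b)
    (hconfηp : ∀ x a b, lieD gp ηp x a b = αηp x * gp x a b)
    (hconfηm : ∀ x a b, lieD gm ηm x a b = αηm x * gm x a b) :
    ∀ p (pick : Fin 4 → Option (Fin d)),
      form4 gp ηp ξp (Φp p) (fun i => frameV Φp ℓp p (pick i))
        = form4 gm ηm ξm (Φm p) (fun i => frameV Φm ℓm p (pick i))
      ∧
      form4 gp ξp ηp (Φp p) (fun i => frameV Φp ℓp p (pick i))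
        = form4 gm ξm ηm (Φm p) (fun i => frameV Φm ℓm p (pick i)) := by
  intro p pick
  constructor
  · exact master gp ginvp gm ginvm Φp Φm ℓp ℓm ηp ξp ηm ξm γ₂ γ₁ αξp αξm
      hgp hgm hgpsymm hgmsymm hinvp hinvm hΦp hΦm hℓp hℓm hξp hξm hγ₁
      hmatch hℓe hH hrelηp hrelηm hrelξp hrelξm hconfξp hconfξm p pick
  · exact master gp ginvp gm ginvm Φp Φm ℓp ℓm ξp ηp ξm ηm γ₁ γ₂ αηp αηm
      hgp hgm hgpsymm hgmsymm hinvp hinvm hΦp hΦm hℓp hℓm hηp hηm hγ₂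
      hmatch hℓe hH hrelξp hrelξm hrelηp hrelηm hconfηp hconfηm p pick
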